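/- If an hohh sequent Σ; ⟦Γ⟧ ⟶ (⟦A⟧ M) for a base LF type A ends in a backchain on the clause encoding y : Πy1:B1....Πyn:Bn. A' from Γ, then there exist hohh terms N1,...,Nn with M = y N1 ... Nn, ⟨A⟩ = ⟨A'⟩[N1/y1,...,Nn/yn], and for each i a strictly smaller derivation of Σ; ⟦Γ⟧ ⟶ ⟦Bi⟧[N1/y1,...,N(i-1)/y(i-1)] Ni. -/

import Mathlib

namespace LFHH

/-! ## Simple types and hohh terms -/

inductive STy : Type
  | lfobj | lftype | o
  | arrow (a b : STy)
deriving DecidableEq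

/-- hohh terms: de Bruijn bound variables, named constants. -/
inductive HTerm : Type
  | bvar (n : ℕ)
  | con (c : ℕ)
  | lam (τ : STy) (t : HTerm)
  | app (t u : HTerm)
deriving DecidableEq

def hshift (d c : ℕ) : HTerm → HTerm
  | .bvar n => if n < c then .bvar n else .bvar (n + d)
  | .con k => .con k
  | .lam τ t => .lam τ (hshift d (c+1) t)
  | .app t u => .app (hshift d c t) (hshift d c u)

/-- substitute `s` for de Bruijn index `k` (standard, with lowering). -/
def hsubst (k : ℕ) (s : HTerm) : HTerm → HTerm
  | .bvar n => if n = k then hshift k 0 s else if k < n then .bvar (n-1) else .bvar n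
  | .con c => .con c
  | .lam τ t => .lam τ (hsubst (k+1) s t)
  | .app t u => .app (hsubst k s t) (hsubst k s u)

/-- substitute `s` for the constant `c`. -/
def hsubstCon (c : ℕ) (s : HTerm) : HTerm → HTerm
  | .bvar n => .bvar n
  | .con k => if k = c then s else .con k
  | .lam τ t => .lam τ (hsubstCon c s t)
  | .app t u => .app (hsubstCon c s t) (hsubstCon c s u)

/-- simultaneous substitution of terms for constants. -/
def hsubstSim (σ : ℕ → Option HTerm) : HTerm → HTerm
  | .bvar n => .bvar n
  | .con k => (σ k).getD (.con k)
  | .lam τ t => .lam τ (hsubstSim σ t)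
  | .app t u => .app (hsubstSim σ t) (hsubstSim σ u)

/-- constants occurring in a term. -/
def hcons : HTerm → List ℕ
  | .bvar _ => []
  | .con c => [c]
  | .lam _ t => hcons t
  | .app t u => hcons t ++ hcons u

/-- beta reduction step. -/
inductive HStepB : HTerm → HTerm → Prop
  | beta (τ : STy) (t u : HTerm) : HStepB (.app (.lam τ t) u) (hsubst 0 u t)
  | lam (τ : STy) {t t'} : HStepB t t' → HStepB (.lam τ t) (.lam τ t')
  | appl {t t'} (u) : HStepB t t' → HStepB (.app t u) (.app t' u)
  | appr (t) {u u'} : HStepB u u' → HStepB (.app t u) (.app t u')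

/-- beta or eta reduction step. -/
inductive HStep : HTerm → HTerm → Prop
  | beta (τ : STy) (t u : HTerm) : HStep (.app (.lam τ t) u) (hsubst 0 u t)
  | eta (τ : STy) (t : HTerm) : HStep (.lam τ (.app (hshift 1 0 t) (.bvar 0))) t
  | lam (τ : STy) {t t'} : HStep t t' → HStep (.lam τ t) (.lam τ t')
  | appl {t t'} (u) : HStep t t' → HStep (.app t u) (.app t' u)
  | appr (t) {u u'} : HStep t u' → HStep (.app t u) (.app t u')

def HNormal (t : HTerm) : Prop := ∀ u, ¬ HStep t u
def HNormalB (t : HTerm) : Prop := ∀ u, ¬ HStepB t u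

/-- `t` beta-normalizes to `t'`. -/
def HBNF (t t' : HTerm) : Prop := Relation.ReflTransGen HStepB t t' ∧ HNormalB t'

/-! ## hohh formulas -/

inductive HForm : Type
  | top
  | hastype (m a : HTerm)
  | papp (u : ℕ) (args : List HTerm)
  | imp (f g : HForm)
  | all (τ : STy) (f : HForm)
deriving DecidableEq

def substF (k : ℕ) (s : HTerm) : HForm → HForm
  | .top => .top
  | .hastype m a => .hastype (hsubst k s m) (hsubst k s a)
  | .papp u args => .papp u (args.map (hsubst k s))
  | .imp f g => .imp (substF k s f) (substF k s g)
  | .all τ f => .all τ (substF (k+1) s f)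

def closeT (k x : ℕ) : HTerm → HTerm
  | .bvar n => .bvar n
  | .con c => if c = x then .bvar k else .con c
  | .lam τ t => .lam τ (closeT (k+1) x t)
  | .app t u => .app (closeT k x t) (closeT k x u)

def closeF (k x : ℕ) : HForm → HForm
  | .top => .top
  | .hastype m a => .hastype (closeT k x m) (closeT k x a)
  | .papp u args => .papp u (args.map (closeT k x))
  | .imp f g => .imp (closeF k x f) (closeF k x g)
  | .all τ f => .all τ (closeF (k+1) x f)

def IsAtom : HForm → Prop
  | .hastype _ _ => True
  | .papp _ _ => True
  | _ => False

mutual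
  def IsG : HForm → Prop
    | .top => True
    | .hastype _ _ => True
    | .papp _ _ => True
    | .imp d g => IsD d ∧ IsG g
    | .all _ g => IsG g
  def IsD : HForm → Prop
    | .top => False
    | .hastype _ _ => True
    | .papp _ _ => True
    | .imp g d => IsG g ∧ IsD d
    | .all _ d => IsD d
end

/-! ## hohh typing and sequent calculus -/

abbrev Sig := List (ℕ × STy)

def sigNames (Sg : Sig) : List ℕ := Sg.map Prod.fst

inductive HWt : Sig → List STy → HTerm → STy → Prop
  | bvar {Sg env n τ} : env[n]? = some τ → HWt Sg env (.bvar n) τ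
  | con {Sg env c τ} : (c, τ) ∈ Sg → HWt Sg env (.con c) τ
  | lam {Sg env τ σ t} : HWt Sg (τ :: env) t σ → HWt Sg env (.lam τ t) (.arrow τ σ)
  | app {Sg env τ σ t u} : HWt Sg env t (.arrow τ σ) → HWt Sg env u τ →
      HWt Sg env (.app t u) σ

/-! Height-indexed sequent calculus for the hohh fragment. -/
mutual
  inductive Seq : ℕ → Sig → List HForm → HForm → Prop
    | top {n Sg Γ} : Seq n Sg Γ .top
    | impR {n Sg Γ d g} : Seq n Sg (d :: Γ) g → Seq (n+1) Sg Γ (.imp d g)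
    | allR {n Sg Γ τ g} (c : ℕ) : c ∉ sigNames Sg →
        Seq n ((c, τ) :: Sg) Γ (substF 0 (.con c) g) → Seq (n+1) Sg Γ (.all τ g)
    | decide {n Sg Γ a d} : d ∈ Γ → IsAtom a → Focus n Sg Γ a d → Seq (n+1) Sg Γ a
  inductive Focus : ℕ → Sig → List HForm → HForm → HForm → Prop
    | init {n Sg Γ a} : IsAtom a → Focus n Sg Γ a a
    | allL {n Sg Γ a τ d} (t : HTerm) : HWt Sg [] t τ →
        Focus n Sg Γ a (substF 0 t d) → Focus (n+1) Sg Γ a (.all τ d)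
    | impL {n Sg Γ a g d} : Seq n Sg Γ g → Focus n Sg Γ a d →
        Focus (n+1) Sg Γ a (.imp g d)
end

/-- derivability (some height). -/
def SeqD (Sg : Sig) (Γ : List HForm) (g : HForm) : Prop := ∃ n, Seq n Sg Γ g

/-- clause ∀x1.(F1 ⊃ ... ∀xn.(Fn ⊃ A')...). -/
def mkClause : List (STy × HForm) → HForm → HForm
  | [], a => a
  | (τ, f) :: L, a => .all τ (.imp f (mkClause L a))

/-- peel a clause along a list of instantiating terms, returning
the instantiated bodies and head. -/
def peel : List HTerm → HForm → Option (List HForm × HForm)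
  | [], f => some ([], f)
  | t :: ts, .all _ (.imp g d) =>
      (peel ts (substF 0 t d)).map (fun p => ((substF 0 t g) :: p.1, p.2))
  | _ :: _, _ => none

/-! ## LF syntax -/

mutual
  inductive LFKind : Type
    | type
    | pi (A : LFType) (K : LFKind)
  inductive LFType : Type
    | tvar (u : ℕ)
    | pi (A : LFType) (B : LFType)
    | lam (A : LFType) (B : LFType)
    | app (A : LFType) (M : LFObj)
  inductive LFObj : Type
    | bvar (n : ℕ)
    | fvar (x : ℕ)
    | lam (A : LFType) (M : LFObj)
    | app (M N : LFObj)
end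

/-! open: instantiate bound variable `k` with object `N` (locally nameless style). -/
mutual
  def openK (k : ℕ) (N : LFObj) : LFKind → LFKind
    | .type => .type
    | .pi A K => .pi (openT k N A) (openK (k+1) N K)
  def openT (k : ℕ) (N : LFObj) : LFType → LFType
    | .tvar u => .tvar u
    | .pi A B => .pi (openT k N A) (openT (k+1) N B)
    | .lam A B => .lam (openT k N A) (openT (k+1) N B)
    | .app A M => .app (openT k N A) (openO k N M)
  def openO (k : ℕ) (N : LFObj) : LFObj → LFObj
    | .bvar n => if n = k then N else .bvar n
    | .fvar x => .fvar x
    | .lam A M => .lam (openT k N A) (openO (k+1) N M)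
    | .app M M' => .app (openO k N M) (openO k N M')
end

/-! substitute object `N` for the free (named) variable `x`. -/
mutual
  def substK (x : ℕ) (N : LFObj) : LFKind → LFKind
    | .type => .type
    | .pi A K => .pi (substT x N A) (substK x N K)
  def substT (x : ℕ) (N : LFObj) : LFType → LFType
    | .tvar u => .tvar u
    | .pi A B => .pi (substT x N A) (substT x N B)
    | .lam A B => .lam (substT x N A) (substT x N B)
    | .app A M => .app (substT x N A) (substO x N M)
  def substO (x : ℕ) (N : LFObj) : LFObj → LFObj
    | .bvar n => .bvar n
    | .fvar y => if y = x then N else .fvar y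
    | .lam A M => .lam (substT x N A) (substO x N M)
    | .app M M' => .app (substO x N M) (substO x N M')
end

/-! simultaneous substitution of objects for free variables. -/
mutual
  def substSimK (σ : ℕ → Option LFObj) : LFKind → LFKind
    | .type => .type
    | .pi A K => .pi (substSimT σ A) (substSimK σ K)
  def substSimT (σ : ℕ → Option LFObj) : LFType → LFType
    | .tvar u => .tvar u
    | .pi A B => .pi (substSimT σ A) (substSimT σ B)
    | .lam A B => .lam (substSimT σ A) (substSimT σ B)
    | .app A M => .app (substSimT σ A) (substSimO σ M)
  def substSimO (σ : ℕ → Option LFObj) : LFObj → LFObj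
    | .bvar n => .bvar n
    | .fvar y => (σ y).getD (.fvar y)
    | .lam A M => .lam (substSimT σ A) (substSimO σ M)
    | .app M M' => .app (substSimO σ M) (substSimO σ M')
end

/-! rename free variable `x` (object-level and type-level) to `y`. -/
mutual
  def renameK (x y : ℕ) : LFKind → LFKind
    | .type => .type
    | .pi A K => .pi (renameT x y A) (renameK x y K)
  def renameT (x y : ℕ) : LFType → LFType
    | .tvar u => .tvar (if u = x then y else u)
    | .pi A B => .pi (renameT x y A) (renameT x y B)
    | .lam A B => .lam (renameT x y A) (renameT x y B)
    | .app A M => .app (renameT x y A) (renameO x y M)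
  def renameO (x y : ℕ) : LFObj → LFObj
    | .bvar n => .bvar n
    | .fvar z => .fvar (if z = x then y else z)
    | .lam A M => .lam (renameT x y A) (renameO x y M)
    | .app M M' => .app (renameO x y M) (renameO x y M')
end

/-! free names occurring in LF expressions (both object- and type-level names). -/
mutual
  def namesK : LFKind → List ℕ
    | .type => []
    | .pi A K => namesT A ++ namesK K
  def namesT : LFType → List ℕ
    | .tvar u => [u]
    | .pi A B => namesT A ++ namesT B
    | .lam A B => namesT A ++ namesT B
    | .app A M => namesT A ++ namesO M
  def namesO : LFObj → List ℕ
    | .bvar _ => []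
    | .fvar x => [x]
    | .lam A M => namesT A ++ namesO M
    | .app M M' => namesO M ++ namesO M'
end

/-! local closedness: all bound-variable indices below `k`. -/
mutual
  def closedK (k : ℕ) : LFKind → Prop
    | .type => True
    | .pi A K => closedT k A ∧ closedK (k+1) K
  def closedT (k : ℕ) : LFType → Prop
    | .tvar _ => True
    | .pi A B => closedT k A ∧ closedT (k+1) B
    | .lam A B => closedT k A ∧ closedT (k+1) B
    | .app A M => closedT k A ∧ closedO k M
  def closedO (k : ℕ) : LFObj → Prop
    | .bvar n => n < k
    | .fvar _ => True
    | .lam A M => closedT k A ∧ closedO (k+1) M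
    | .app M M' => closedO k M ∧ closedO k M'
end

def LC (M : LFObj) : Prop := closedO 0 M

/-! ## LF beta reduction and normal forms -/

mutual
  inductive StepK : LFKind → LFKind → Prop
    | pi1 {A A' K} : StepT A A' → StepK (.pi A K) (.pi A' K)
    | pi2 {A K K'} : StepK K K' → StepK (.pi A K) (.pi A K')
  inductive StepT : LFType → LFType → Prop
    | beta {A B N} : StepT (.app (.lam A B) N) (openT 0 N B)
    | pi1 {A A' B} : StepT A A' → StepT (.pi A B) (.pi A' B)
    | pi2 {A B B'} : StepT B B' → StepT (.pi A B) (.pi A B')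
    | lam1 {A A' B} : StepT A A' → StepT (.lam A B) (.lam A' B)
    | lam2 {A B B'} : StepT B B' → StepT (.lam A B) (.lam A B')
    | app1 {A A' M} : StepT A A' → StepT (.app A M) (.app A' M)
    | app2 {A M M'} : StepO M M' → StepT (.app A M) (.app A M')
  inductive StepO : LFObj → LFObj → Prop
    | beta {A M N} : StepO (.app (.lam A M) N) (openO 0 N M)
    | lam1 {A A' M} : StepT A A' → StepO (.lam A M) (.lam A' M)
    | lam2 {A M M'} : StepO M M' → StepO (.lam A M) (.lam A M')
    | app1 {M M' N} : StepO M M' → StepO (.app M N) (.app M' N)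
    | app2 {M N N'} : StepO N N' → StepO (.app M N) (.app M N')
end

def NormK (K : LFKind) : Prop := ∀ K', ¬ StepK K K'
def NormT (A : LFType) : Prop := ∀ A', ¬ StepT A A'
def NormO (M : LFObj) : Prop := ∀ M', ¬ StepO M M'

/-- beta-normalization relations. -/
def KNF (K K' : LFKind) : Prop := Relation.ReflTransGen StepK K K' ∧ NormK K'
def TNF (A A' : LFType) : Prop := Relation.ReflTransGen StepT A A' ∧ NormT A'
def ONF (M M' : LFObj) : Prop := Relation.ReflTransGen StepO M M' ∧ NormO M'

/-! ## LF contexts, judgments, typing -/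

inductive EVal : Type
  | kind (K : LFKind)
  | type (A : LFType)

abbrev Ctx := List (ℕ × EVal)

def ctxNames (Γ : Ctx) : List ℕ := Γ.map Prod.fst

def EVNF : EVal → EVal → Prop
  | .kind K, .kind K' => KNF K K'
  | .type A, .type A' => TNF A A'
  | _, _ => False

def CtxNF (Γ Γ' : Ctx) : Prop :=
  List.Forall₂ (fun p q => p.1 = q.1 ∧ EVNF p.2 q.2) Γ Γ'

def substEV (x : ℕ) (N : LFObj) : EVal → EVal
  | .kind K => .kind (substK x N K)
  | .type A => .type (substT x N A)

def substCtx (x : ℕ) (N : LFObj) (Γ : Ctx) : Ctx :=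
  Γ.map (fun p => (p.1, substEV x N p.2))

def renameEV (x y : ℕ) : EVal → EVal
  | .kind K => .kind (renameK x y K)
  | .type A => .type (renameT x y A)

def renameCtx (x y : ℕ) (Γ : Ctx) : Ctx :=
  Γ.map (fun p => (p.1, renameEV x y p.2))

/-- LF judgments (other than context well-formedness). -/
inductive LFJudg : Type
  | kind (K : LFKind)
  | istype (A : LFType) (K : LFKind)
  | isobj (M : LFObj) (A : LFType)

def substJudg (x : ℕ) (N : LFObj) : LFJudg → LFJudg
  | .kind K => .kind (substK x N K)
  | .istype A K => .istype (substT x N A) (substK x N K)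
  | .isobj M A => .isobj (substO x N M) (substT x N A)

def renameJudg (x y : ℕ) : LFJudg → LFJudg
  | .kind K => .kind (renameK x y K)
  | .istype A K => .istype (renameT x y A) (renameK x y K)
  | .isobj M A => .isobj (renameO x y M) (renameT x y A)

def namesJudg : LFJudg → List ℕ
  | .kind K => namesK K
  | .istype A K => namesT A ++ namesK K
  | .isobj M A => namesO M ++ namesT A

def JudgNF : LFJudg → LFJudg → Prop
  | .kind K, .kind K' => KNF K K'
  | .istype A K, .istype A' K' => TNF A A' ∧ KNF K K'
  | .isobj M A, .isobj M' A' => ONF M M' ∧ TNF A A'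
  | _, _ => False

/-! The LF typing rules (Figure 2), in locally nameless style. -/
mutual
  inductive WfCtx : Ctx → Prop
    | nil : WfCtx []
    | kind {Γ K u} : WfKind Γ K → WfCtx Γ → u ∉ ctxNames Γ →
        WfCtx ((u, .kind K) :: Γ)
    | type {Γ A x} : WfType Γ A .type → WfCtx Γ → x ∉ ctxNames Γ →
        WfCtx ((x, .type A) :: Γ)
  inductive WfKind : Ctx → LFKind → Prop
    | type {Γ} : WfCtx Γ → WfKind Γ .type
    | pi {Γ A K} (x : ℕ) : WfType Γ A .type →
        x ∉ ctxNames Γ → x ∉ namesK K →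
        WfKind ((x, .type A) :: Γ) (openK 0 (.fvar x) K) →
        WfKind Γ (.pi A K)
  inductive WfType : Ctx → LFType → LFKind → Prop
    | var {Γ u K K'} : WfCtx Γ → (u, .kind K) ∈ Γ → KNF K K' →
        WfType Γ (.tvar u) K'
    | pi {Γ A B} (x : ℕ) : WfType Γ A .type →
        x ∉ ctxNames Γ → x ∉ namesT B →
        WfType ((x, .type A) :: Γ) (openT 0 (.fvar x) B) .type →
        WfType Γ (.pi A B) .type
    | lam {Γ A A' B K} (x : ℕ) : WfType Γ A .type →
        x ∉ ctxNames Γ → x ∉ namesT B → x ∉ namesK K →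
        WfType ((x, .type A) :: Γ) (openT 0 (.fvar x) B) (openK 0 (.fvar x) K) →
        TNF A A' →
        WfType Γ (.lam A B) (.pi A' K)
    | app {Γ A B K K' M} : WfType Γ A (.pi B K) → WfObj Γ M B →
        KNF (openK 0 M K) K' → WfType Γ (.app A M) K'
  inductive WfObj : Ctx → LFObj → LFType → Prop
    | var {Γ x A A'} : WfCtx Γ → (x, .type A) ∈ Γ → TNF A A' →
        WfObj Γ (.fvar x) A'
    | lam {Γ A A' B M} (x : ℕ) : WfType Γ A .type →
        x ∉ ctxNames Γ → x ∉ namesO M → x ∉ namesT B →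
        WfObj ((x, .type A) :: Γ) (openO 0 (.fvar x) M) (openT 0 (.fvar x) B) →
        TNF A A' →
        WfObj Γ (.lam A M) (.pi A' B)
    | app {Γ M N A B B'} : WfObj Γ M (.pi A B) → WfObj Γ N A →
        TNF (openT 0 N B) B' → WfObj Γ (.app M N) B'
end

def WfJudg (Γ : Ctx) : LFJudg → Prop
  | .kind K => WfKind Γ K
  | .istype A K => WfType Γ A K
  | .isobj M A => WfObj Γ M A

/-! ## Canonical forms -/

/-! Canonical (beta-normal, eta-long / fully applied) forms of LF,
presented as the standard canonical-forms type system. -/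
mutual
  inductive CanK : Ctx → LFKind → Prop
    | type {Γ} : CanK Γ .type
    | pi {Γ A K} (x : ℕ) : CanT Γ A .type →
        x ∉ ctxNames Γ → x ∉ namesK K →
        CanK ((x, .type A) :: Γ) (openK 0 (.fvar x) K) →
        CanK Γ (.pi A K)
  inductive CanT : Ctx → LFType → LFKind → Prop
    | atom {Γ A} : AtT Γ A .type → CanT Γ A .type
    | pi {Γ A B} (x : ℕ) : CanT Γ A .type →
        x ∉ ctxNames Γ → x ∉ namesT B →
        CanT ((x, .type A) :: Γ) (openT 0 (.fvar x) B) .type →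
        CanT Γ (.pi A B) .type
    | lam {Γ A B K} (x : ℕ) : CanT Γ A .type →
        x ∉ ctxNames Γ → x ∉ namesT B → x ∉ namesK K →
        CanT ((x, .type A) :: Γ) (openT 0 (.fvar x) B) (openK 0 (.fvar x) K) →
        CanT Γ (.lam A B) (.pi A K)
  inductive AtT : Ctx → LFType → LFKind → Prop
    | var {Γ u K} : (u, .kind K) ∈ Γ → AtT Γ (.tvar u) K
    | app {Γ A B K K' M} : AtT Γ A (.pi B K) → CanO Γ M B →
        KNF (openK 0 M K) K' → AtT Γ (.app A M) K'
  inductive CanO : Ctx → LFObj → LFType → Prop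
    | atom {Γ M A} : AtO Γ M A → AtT Γ A .type → CanO Γ M A
    | lam {Γ A B M} (x : ℕ) : CanT Γ A .type →
        x ∉ ctxNames Γ → x ∉ namesO M → x ∉ namesT B →
        CanO ((x, .type A) :: Γ) (openO 0 (.fvar x) M) (openT 0 (.fvar x) B) →
        CanO Γ (.lam A M) (.pi A B)
  inductive AtO : Ctx → LFObj → LFType → Prop
    | var {Γ x A} : (x, .type A) ∈ Γ → AtO Γ (.fvar x) A
    | app {Γ M N A B B'} : AtO Γ M (.pi A B) → CanO Γ N A →
        TNF (openT 0 N B) B' → AtO Γ (.app M N) B'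
end

inductive CanCtx : Ctx → Prop
  | nil : CanCtx []
  | kind {Γ K u} : CanK Γ K → CanCtx Γ → u ∉ ctxNames Γ →
      CanCtx ((u, .kind K) :: Γ)
  | type {Γ A x} : CanT Γ A .type → CanCtx Γ → x ∉ ctxNames Γ →
      CanCtx ((x, .type A) :: Γ)

def CanEV (Γ : Ctx) : EVal → Prop
  | .kind K => CanK Γ K
  | .type A => CanT Γ A .type

def CanJudg (Γ : Ctx) : LFJudg → Prop
  | .kind K => CanK Γ K
  | .istype A K => CanT Γ A K
  | .isobj M A => CanO Γ M A

/-! ## Encoding of LF into hohh -/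

/-- simple type assigned to the encoding of an object of a given LF type. -/
def phiT : LFType → STy
  | .pi A B => .arrow (phiT A) (phiT B)
  | _ => .lfobj

def phiK : LFKind → STy
  | .type => .lftype
  | .pi A K => .arrow (phiT A) (phiK K)

/-! type-erasing encoding of LF objects and (base) types into hohh terms. -/
mutual
  def encO : LFObj → HTerm
    | .bvar n => .bvar n
    | .fvar x => .con x
    | .lam A M => .lam (phiT A) (encO M)
    | .app M N => .app (encO M) (encO N)
  def encT : LFType → HTerm
    | .tvar u => .con u
    | .app A M => .app (encT A) (encO M)
    | .pi _ _ => .con 0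
    | .lam _ _ => .con 0
end

def IsBaseT : LFType → Prop
  | .tvar _ => True
  | .app A _ => IsBaseT A
  | _ => False

/-- head type-family constant of a base type. -/
def headT : LFType → ℕ
  | .tvar u => u
  | .app A _ => headT A
  | _ => 0

/-- encoded argument list of a base type. -/
def argsT : LFType → List HTerm
  | .app A M => argsT A ++ [encO M]
  | _ => []

/-- signature of constants corresponding to an LF context. -/
def sigOf (Γ : Ctx) : Sig :=
  Γ.map (fun p => (p.1, match p.2 with | .kind K => phiK K | .type A => phiT A))

/-! ## The simple translation -/

/-- ⟦A⟧ M = F : the simple translation of an LF type applied to an hohh term. -/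
inductive SimpleT : LFType → HTerm → HForm → Prop
  | base {A M} : IsBaseT A → SimpleT A M (.hastype M (encT A))
  | pi {A B M FA FB} (x : ℕ) :
      x ∉ namesT A → x ∉ namesT B → x ∉ hcons M →
      SimpleT A (.con x) FA →
      SimpleT (openT 0 (.fvar x) B) (.app M (.con x)) FB →
      SimpleT (.pi A B) M (.all (phiT A) (closeF 0 x (.imp FA FB)))

/-- translation of an LF context (specification) into a logic program;
kind assignments are dropped. -/
inductive SimpleCtx : Ctx → List HForm → Prop
  | nil : SimpleCtx [] []
  | kind {Γ Ds u K} : SimpleCtx Γ Ds → SimpleCtx ((u, .kind K) :: Γ) Ds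
  | type {Γ Ds x A F} : SimpleT A (.con x) F → SimpleCtx Γ Ds →
      SimpleCtx ((x, .type A) :: Γ) (F :: Ds)

/-! ## Rigid occurrences -/

/-- LF-level argument list of a base type. -/
def argsLF : LFType → List LFObj
  | .app A M => argsLF A ++ [M]
  | _ => []

mutual
  /-- Γ⃗; δ; x ⊢o M : x occurs rigidly in the object M. -/
  inductive RigidO : List ℕ → List ℕ → ℕ → LFObj → Prop
    | init {gs δ x} (ys : List ℕ) : ys.Nodup → (∀ y ∈ ys, y ∈ δ) →
        RigidO gs δ x ((ys.map LFObj.fvar).foldl LFObj.app (.fvar x))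
    | app {gs δ x y} (args : List LFObj) {Mi} : y ∉ gs → Mi ∈ args →
        RigidO gs δ x Mi →
        RigidO gs δ x (args.foldl LFObj.app (.fvar y))
    | abs {gs δ x A M} (y : ℕ) : y ∉ δ → y ∉ gs → y ≠ x → y ∉ namesO M →
        RigidO gs (δ ++ [y]) x (openO 0 (.fvar y) M) →
        RigidO gs δ x (.lam A M)
  /-- Γ⃗; x ⊢t A : x occurs rigidly in the type A. -/
  inductive RigidT : List ℕ → ℕ → LFType → Prop
    | app {gs x A} (Mi : LFObj) : IsBaseT A → Mi ∈ argsLF A → RigidO gs [] x Mi →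
        RigidT gs x A
    | pi {gs x A B} (y : ℕ) : y ∉ gs → y ≠ x → y ∉ namesT B →
        RigidT (gs ++ [y]) x (openT 0 (.fvar y) B) →
        RigidT gs x (.pi A B)
end

/-! ## The optimized translation -/

mutual
  /-- ⦇A⦈Γ⃗ M = F : negative (program clause) optimized translation. -/
  inductive OptN : List ℕ → LFType → HTerm → HForm → Prop
    | base {gs A M} : IsBaseT A → OptN gs A M (.papp (headT A) (M :: argsT A))
    | pi_rigid {gs A B M F} (x : ℕ) :
        x ∉ gs → x ∉ namesT A → x ∉ namesT B → x ∉ hcons M →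
        RigidT (gs ++ [x]) x (openT 0 (.fvar x) B) →
        OptN (gs ++ [x]) (openT 0 (.fvar x) B) (.app M (.con x)) F →
        OptN gs (.pi A B) M (.all (phiT A) (.imp .top (closeF 0 x F)))
    | pi_nonrigid {gs A B M FA F} (x : ℕ) :
        x ∉ gs → x ∉ namesT A → x ∉ namesT B → x ∉ hcons M →
        ¬ RigidT (gs ++ [x]) x (openT 0 (.fvar x) B) →
        OptP A (.con x) FA →
        OptN (gs ++ [x]) (openT 0 (.fvar x) B) (.app M (.con x)) F →
        OptN gs (.pi A B) M (.all (phiT A) (closeF 0 x (.imp FA F)))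
  /-- ⦃A⦄ M = F : positive (goal) optimized translation. -/
  inductive OptP : LFType → HTerm → HForm → Prop
    | base {A M} : IsBaseT A → OptP A M (.papp (headT A) (M :: argsT A))
    | pi {A B M FA F} (x : ℕ) :
        x ∉ namesT A → x ∉ namesT B → x ∉ hcons M →
        OptN [] A (.con x) FA →
        OptP (openT 0 (.fvar x) B) (.app M (.con x)) F →
        OptP (.pi A B) M (.all (phiT A) (closeF 0 x (.imp FA F)))
end

inductive OptCtx : Ctx → List HForm → Prop
  | nil : OptCtx [] []
  | kind {Γ Ds u K} : OptCtx Γ Ds → OptCtx ((u, .kind K) :: Γ) Ds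
  | type {Γ Ds x A F} : OptN [] A (.con x) F → OptCtx Γ Ds →
      OptCtx ((x, .type A) :: Γ) (F :: Ds)

/-! ## Miscellaneous -/

/-- Π-prefix construction: mkPi [B1,...,Bn] A = ΠB1....ΠBn. A (de Bruijn). -/
def mkPi (Bs : List LFType) (A : LFType) : LFType := Bs.foldr .pi A

/-- instantiate the de Bruijn variables of the body of an n-ary Π-prefix:
the i-th term replaces index (n-1-i). -/
def instT (ts : List LFObj) (A : LFType) : LFType :=
  (((List.range ts.length).reverse).zip ts).foldl (fun A p => openT p.1 p.2 A) A

/-- environment mapping names to hohh terms. -/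
def envOf (xs : List ℕ) (ts : List HTerm) : ℕ → Option HTerm :=
  fun v => ((xs.zip ts).find? (fun p => p.1 = v)).map Prod.snd

/-- environment mapping names to LF objects. -/
def lfEnvOf (xs : List ℕ) (ts : List LFObj) : ℕ → Option LFObj :=
  fun v => ((xs.zip ts).find? (fun p => p.1 = v)).map Prod.snd

/-! (A' ~ A)σ : equality of types up to σ-instantiated encodings of embedded objects. -/
mutual
  inductive KSim (σ : ℕ → Option HTerm) : LFKind → LFKind → Prop
    | type : KSim σ .type .type
    | pi {A A' K K'} : TSim σ A' A → KSim σ K' K → KSim σ (.pi A' K') (.pi A K)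
  inductive TSim (σ : ℕ → Option HTerm) : LFType → LFType → Prop
    | tvar {u} : TSim σ (.tvar u) (.tvar u)
    | pi {A A' B B'} : TSim σ A' A → TSim σ B' B → TSim σ (.pi A' B') (.pi A B)
    | lam {A A' B B'} : TSim σ A' A → TSim σ B' B → TSim σ (.lam A' B') (.lam A B)
    | app {A A' M M'} : TSim σ A' A → encO M' = hsubstSim σ (encO M) →
        TSim σ (.app A' M') (.app A M)
end

def EVSim (σ : ℕ → Option HTerm) : EVal → EVal → Prop
  | .kind K', .kind K => KSim σ K' K
  | .type A', .type A => TSim σ A' A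
  | _, _ => False

def CtxSim (σ : ℕ → Option HTerm) (Δ' Δ : Ctx) : Prop :=
  List.Forall₂ (fun p q => p.1 = q.1 ∧ EVSim σ p.2 q.2) Δ' Δ

/-! ## Normal-expression LF derivations (for Statement 14) -/

def NormEV : EVal → Prop
  | .kind K => NormK K
  | .type A => NormT A

def NormCtxP (Γ : Ctx) : Prop := ∀ p ∈ Γ, NormEV p.2

def NormJudg : LFJudg → Prop
  | .kind K => NormK K
  | .istype A K => NormT A ∧ NormK K
  | .isobj M A => NormO M ∧ NormT A

/-! LF typing restricted so that every expression in the derivation is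
beta-normal; in abstraction rules the annotation and the Pi-domain coincide. -/
mutual
  inductive WfNCtx : Ctx → Prop
    | nil : WfNCtx []
    | kind {Γ K u} : WfNKind Γ K → WfNCtx Γ → u ∉ ctxNames Γ →
        WfNCtx ((u, .kind K) :: Γ)
    | type {Γ A x} : WfNType Γ A .type → WfNCtx Γ → x ∉ ctxNames Γ →
        WfNCtx ((x, .type A) :: Γ)
  inductive WfNKind : Ctx → LFKind → Prop
    | type {Γ} : WfNCtx Γ → WfNKind Γ .type
    | pi {Γ A K} (x : ℕ) : WfNType Γ A .type →
        x ∉ ctxNames Γ → x ∉ namesK K →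
        WfNKind ((x, .type A) :: Γ) (openK 0 (.fvar x) K) →
        WfNKind Γ (.pi A K)
  inductive WfNType : Ctx → LFType → LFKind → Prop
    | var {Γ u K} : WfNCtx Γ → (u, .kind K) ∈ Γ → NormK K →
        WfNType Γ (.tvar u) K
    | pi {Γ A B} (x : ℕ) : WfNType Γ A .type →
        x ∉ ctxNames Γ → x ∉ namesT B →
        WfNType ((x, .type A) :: Γ) (openT 0 (.fvar x) B) .type →
        WfNType Γ (.pi A B) .type
    | lam {Γ A B K} (x : ℕ) : WfNType Γ A .type → NormT A →
        x ∉ ctxNames Γ → x ∉ namesT B → x ∉ namesK K →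
        WfNType ((x, .type A) :: Γ) (openT 0 (.fvar x) B) (openK 0 (.fvar x) K) →
        WfNType Γ (.lam A B) (.pi A K)
    | app {Γ A B K K' M} : WfNType Γ A (.pi B K) → WfNObj Γ M B →
        KNF (openK 0 M K) K' → WfNType Γ (.app A M) K'
  inductive WfNObj : Ctx → LFObj → LFType → Prop
    | var {Γ x A} : WfNCtx Γ → (x, .type A) ∈ Γ → NormT A →
        WfNObj Γ (.fvar x) A
    | lam {Γ A B M} (x : ℕ) : WfNType Γ A .type → NormT A →
        x ∉ ctxNames Γ → x ∉ namesO M → x ∉ namesT B →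
        WfNObj ((x, .type A) :: Γ) (openO 0 (.fvar x) M) (openT 0 (.fvar x) B) →
        WfNObj Γ (.lam A M) (.pi A B)
    | app {Γ M N A B B'} : WfNObj Γ M (.pi A B) → WfNObj Γ N A →
        TNF (openT 0 N B) B' → WfNObj Γ (.app M N) B'
end

def WfNJudg (Γ : Ctx) : LFJudg → Prop
  | .kind K => WfNKind Γ K
  | .istype A K => WfNType Γ A K
  | .isobj M A => WfNObj Γ M A

/-
The simple translation of `y : Πy1:B1....Πyn:Bn. A'` is a clause
`∀y1. G1 ⊃ ... ∀yn. Gn ⊃ hastype (y y1 ... yn) a`, the `yi` being de Bruijn indices.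
A focused derivation of an atom from it must alternate `∀L` and `⊃L` exactly `n` times and
end in `init`: the `∀L` witnesses are the `Ni`, the left premises of the `⊃L` steps are the
lower derivations of the instantiated `Gi`, and `init` matches the goal against the
instantiated head `y N1 ... Nn`.
-/

def HClosed (k : ℕ) : HTerm → Prop
  | .bvar n => n < k
  | .con _ => True
  | .lam _ t => HClosed (k+1) t
  | .app t u => HClosed k t ∧ HClosed k u

theorem HWt.hclosed {Sg env t τ} (h : HWt Sg env t τ) : HClosed env.length t := by
  induction h with
  | bvar hget => exact (List.getElem?_eq_some_iff.mp hget).1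
  | con _ => trivial
  | lam _ ih => exact ih
  | app _ _ ih₁ ih₂ => exact ⟨ih₁, ih₂⟩

theorem hshift_of_hclosed : ∀ (t : HTerm) {c} (d : ℕ), HClosed c t → hshift d c t = t
  | .bvar n, c, _, h => by simp only [hshift, if_pos (show n < c from h)]
  | .con _, _, _, _ => rfl
  | .lam τ t, _, d, h => by simp [hshift, hshift_of_hclosed t d h]
  | .app t u, _, d, h => by simp [hshift, hshift_of_hclosed t d h.1, hshift_of_hclosed u d h.2]

theorem hsubst_of_hclosed : ∀ (t : HTerm) {k} (j : ℕ) (s : HTerm), HClosed k t → k ≤ j →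
    hsubst j s t = t
  | .bvar n, k, j, s, h, hle => by
    have hn : n < k := h
    simp [hsubst, show n ≠ j by omega, show ¬ j < n by omega]
  | .con _, _, _, _, _, _ => rfl
  | .lam τ t, k, j, s, h, hle => by
    simp [hsubst, hsubst_of_hclosed t (j+1) s h (Nat.succ_le_succ hle)]
  | .app t u, k, j, s, h, hle => by
    simp [hsubst, hsubst_of_hclosed t j s h.1 hle, hsubst_of_hclosed u j s h.2 hle]

theorem closeT_of_not_mem_hcons : ∀ (t : HTerm) (k x : ℕ), x ∉ hcons t → closeT k x t = t
  | .bvar _, _, _, _ => rfl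
  | .con c, k, x, h => by
    simp only [hcons, List.mem_singleton] at h
    simp [closeT, Ne.symm h]
  | .lam τ t, k, x, h => by simp [closeT, closeT_of_not_mem_hcons t (k+1) x h]
  | .app t u, k, x, h => by
    simp only [hcons, List.mem_append, not_or] at h
    simp [closeT, closeT_of_not_mem_hcons t k x h.1, closeT_of_not_mem_hcons u k x h.2]

/-- `hspine n t` is `t` applied to the de Bruijn indices `n-1, ..., 0`. -/
def hspine : ℕ → HTerm → HTerm
  | 0, t => t
  | n+1, t => hspine n (.app t (.bvar n))

theorem hsubst_hspine : ∀ (m : ℕ) {k} (s w : HTerm), m ≤ k →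
    hsubst k s (hspine m w) = hspine m (hsubst k s w)
  | 0, _, _, _, _ => rfl
  | m+1, k, s, w, hle => by
    rw [hspine, hsubst_hspine m s _ (by omega)]
    simp [hsubst, hspine, show m ≠ k by omega, show ¬ k < m by omega]

theorem closeT_hspine : ∀ (m k x : ℕ) (w : HTerm),
    closeT k x (hspine m w) = hspine m (closeT k x w)
  | 0, _, _, _ => rfl
  | m+1, k, x, w => by
    rw [hspine, closeT_hspine m k x _]
    rfl

theorem hsubst_hspine_succ {t s : HTerm} (n : ℕ) (ht : HClosed 0 t) (hs : HClosed 0 s) :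
    hsubst n s (hspine (n+1) t) = hspine n (.app t s) := by
  rw [hspine, hsubst_hspine n s _ le_rfl]
  simp [hsubst, hsubst_of_hclosed t n s ht (Nat.zero_le n), hshift_of_hclosed s n hs]

/-- `IsClause u n D`: `D` is `∀x1. G1 ⊃ ... ∀xn. Gn ⊃ hastype u a` for some `Gi` and `a`. -/
def IsClause (u : HTerm) : ℕ → HForm → Prop
  | 0, D => ∃ a, D = .hastype u a
  | n+1, D => ∃ τ g d, D = .all τ (.imp g d) ∧ IsClause u n d

theorem IsClause.substF : ∀ {n u D}, IsClause u n D → ∀ (k : ℕ) (s : HTerm),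
    IsClause (hsubst (k+n) s u) n (substF k s D)
  | 0, _, _, ⟨a, hD⟩, k, s => ⟨hsubst k s a, by subst hD; rfl⟩
  | n+1, _, _, ⟨τ, g, d, hD, hd⟩, k, s => by
    subst hD
    refine ⟨τ, LFHH.substF (k+1) s g, LFHH.substF (k+1) s d, rfl, ?_⟩
    simpa only [Nat.add_assoc, Nat.add_comm 1 n] using hd.substF (k+1) s

theorem IsClause.closeF : ∀ {n u D}, IsClause u n D → ∀ (k x : ℕ),
    IsClause (closeT (k+n) x u) n (closeF k x D)
  | 0, _, _, ⟨a, hD⟩, k, x => ⟨closeT k x a, by subst hD; rfl⟩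
  | n+1, _, _, ⟨τ, g, d, hD, hd⟩, k, x => by
    subst hD
    refine ⟨τ, LFHH.closeF (k+1) x g, LFHH.closeF (k+1) x d, rfl, ?_⟩
    simpa only [Nat.add_assoc, Nat.add_comm 1 n] using hd.closeF (k+1) x

def piDepth : LFType → ℕ
  | .pi _ B => piDepth B + 1
  | _ => 0

theorem piDepth_of_isBaseT : ∀ {A : LFType}, IsBaseT A → piDepth A = 0
  | .tvar _, _ | .app _ _, _ => rfl

theorem piDepth_openT : ∀ (B : LFType) (k : ℕ) (N : LFObj),
    piDepth (openT k N B) = piDepth B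
  | .tvar _, _, _ | .lam _ _, _, _ | .app _ _, _, _ => rfl
  | .pi _ B, k, N => by simp [openT, piDepth, piDepth_openT B (k+1) N]

theorem piDepth_mkPi {A' : LFType} (hA' : IsBaseT A') :
    ∀ Bs : List LFType, piDepth (mkPi Bs A') = Bs.length
  | [] => piDepth_of_isBaseT hA'
  | _ :: Bs => congrArg (· + 1) (piDepth_mkPi hA' Bs)

theorem SimpleT.isClause {C t D} (h : SimpleT C t D) :
    IsClause (hspine (piDepth C) t) (piDepth C) D := by
  induction h with
  | base hb =>
    rw [piDepth_of_isBaseT hb]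
    exact ⟨_, rfl⟩
  | @pi A B M FA FB x _ _ hxM _ _ _ ihB =>
    rw [piDepth_openT] at ihB
    have hclose := ihB.closeF 0 x
    rw [Nat.zero_add, closeT_hspine, closeT, closeT_of_not_mem_hcons M _ x hxM, closeT,
      if_pos rfl] at hclose
    exact ⟨phiT A, closeF 0 x FA, closeF 0 x FB, rfl, hclose⟩

theorem Focus.peel_of_isClause : ∀ (n : ℕ) {h Sg Ds M a D} (t : HTerm), HClosed 0 t →
    IsClause (hspine n t) n D → Focus h Sg Ds (.hastype M a) D →
    ∃ Ns Gs, Ns.length = n ∧ peel Ns D = some (Gs, .hastype M a) ∧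
      M = Ns.foldl HTerm.app t ∧ ∀ G ∈ Gs, ∃ m, m < h ∧ Seq m Sg Ds G
  | 0, _, _, _, _, _, _, _, _, ⟨_, hD⟩, hfoc => by
    subst hD
    cases hfoc
    exact ⟨[], [], rfl, rfl, rfl, by simp⟩
  | n+1, _, _, _, _, _, _, t, ht, ⟨τ, g, d, hD, hd⟩, hfoc => by
    subst hD
    cases hfoc with | allL s hs hfoc =>
    cases (hfoc : Focus _ _ _ _ (.imp (substF 0 s g) (substF 0 s d))) with | impL hg hfoc =>
    have hsc : HClosed 0 s := hs.hclosed
    have hd' := hd.substF 0 s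
    rw [Nat.zero_add, hsubst_hspine_succ n ht hsc] at hd'
    obtain ⟨Ns, Gs, hlen, hpeel, hM, hGs⟩ :=
      Focus.peel_of_isClause n (.app t s) ⟨ht, hsc⟩ hd' hfoc
    refine ⟨s :: Ns, substF 0 s g :: Gs, by simp [hlen], by simp [peel, hpeel], hM, ?_⟩
    rintro G (_ | ⟨_, hG⟩)
    · exact ⟨_, by omega, hg⟩
    · obtain ⟨m, hm, hder⟩ := hGs G hG
      exact ⟨m, by omega, hder⟩

/-- inversion of a backchain step on the encoding of a
context item y : Πy1:B1....Πyn:Bn. A'. -/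
theorem backchain_inversion (Γ : Ctx) (A : LFType) (hbase : IsBaseT A)
    (M : HTerm) (y : ℕ) (Bs : List LFType) (A' : LFType) (hA' : IsBaseT A')
    (hmem : (y, EVal.type (mkPi Bs A')) ∈ Γ)
    (Ds : List HForm) (hDs : SimpleCtx Γ Ds)
    (D : HForm) (hD : SimpleT (mkPi Bs A') (.con y) D) (hmemD : D ∈ Ds)
    (h : ℕ) (hfoc : Focus h (sigOf Γ) Ds (.hastype M (encT A)) D) :
    ∃ Ns Gs, Ns.length = Bs.length ∧
      peel Ns D = some (Gs, .hastype M (encT A)) ∧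
      M = Ns.foldl HTerm.app (.con y) ∧
      ∀ G ∈ Gs, ∃ m, m < h ∧ Seq m (sigOf Γ) Ds G := by
  have hclause := hD.isClause
  rw [piDepth_mkPi hA'] at hclause
  exact Focus.peel_of_isClause Bs.length (.con y) trivial hclause hfoc

end LFHH
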